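/- (EUCP property.) Let X ⊆ I be a 2-itemset (|X| = 2) with TWU(X) < MIU(X), i.e., X is not an HTWUI. Then every k-itemset Y (k ≥ 3) obtained from X by appending items whose mu values are at least those of all items in X (i.e., X ⊆ Y and mu(j) ≥ mu(i) for every j ∈ Y \ X and i ∈ X) is neither an HTWUI nor an HUI: TWU(Y) < MIU(Y) and u(Y) < MIU(Y). -/

import Mathlib

/-! TWU is antitone in the itemset and dominates the utility `dbU`, while appending items whose
`mu` is at least that of every item of `X` leaves the minimum `MIU` unchanged; so
`dbU Y ≤ TWU Y ≤ TWU X < MIU X = MIU Y`. -/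

open Finset

variable {ι τ : Type*}

/-- Utility of item `i` in transaction `t`: quantity times unit profit. -/
def itemU (pr : ι → ℝ) (q : ι → τ → ℕ) (i : ι) (t : τ) : ℝ :=
  (q i t : ℝ) * pr i

/-- Utility of itemset `X` in transaction `t`. -/
def setU (pr : ι → ℝ) (q : ι → τ → ℕ) (X : Finset ι) (t : τ) : ℝ :=
  ∑ i ∈ X, itemU pr q i t

/-- Transaction utility of transaction `t` (with item set `Tr t`). -/
def tu (pr : ι → ℝ) (q : ι → τ → ℕ) (Tr : τ → Finset ι) (t : τ) : ℝ :=
  ∑ i ∈ Tr t, itemU pr q i t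

/-- Transaction-weighted utility of itemset `X` in database `D`. -/
def TWU [DecidableEq ι] (pr : ι → ℝ) (q : ι → τ → ℕ) (Tr : τ → Finset ι)
    (D : Finset τ) (X : Finset ι) : ℝ :=
  ∑ t ∈ D.filter (fun t => X ⊆ Tr t), tu pr q Tr t

/-- Utility of itemset `X` in database `D`. -/
def dbU [DecidableEq ι] (pr : ι → ℝ) (q : ι → τ → ℕ) (Tr : τ → Finset ι)
    (D : Finset τ) (X : Finset ι) : ℝ :=
  ∑ t ∈ D.filter (fun t => X ⊆ Tr t), setU pr q X t

/-- Minimum itemset utility of a nonempty itemset `X`. -/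
def MIU (mu : ι → ℝ) (X : Finset ι) (hX : X.Nonempty) : ℝ :=
  X.inf' hX mu

/-- Remaining utility of itemset `X` in transaction `t`: total utility of the items of
`Tr t` that come strictly after every item of `X`. -/
def ru [LinearOrder ι] (pr : ι → ℝ) (q : ι → τ → ℕ) (Tr : τ → Finset ι)
    (X : Finset ι) (t : τ) : ℝ :=
  ∑ i ∈ (Tr t).filter (fun i => ∀ x ∈ X, x < i), itemU pr q i t

/-- Sum of the remaining utilities of itemset `X` over the database `D` (`X.RU`). -/
def dbRU [LinearOrder ι] (pr : ι → ℝ) (q : ι → τ → ℕ) (Tr : τ → Finset ι)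
    (D : Finset τ) (X : Finset ι) : ℝ :=
  ∑ t ∈ D.filter (fun t => X ⊆ Tr t), ru pr q Tr X t

section Monotonicity

variable {pr : ι → ℝ} (q : ι → τ → ℕ) (Tr : τ → Finset ι)

theorem itemU_nonneg (hpr : ∀ i, 0 ≤ pr i) (i : ι) (t : τ) : 0 ≤ itemU pr q i t :=
  mul_nonneg (Nat.cast_nonneg _) (hpr i)

theorem setU_le_tu (hpr : ∀ i, 0 ≤ pr i) {X : Finset ι} {t : τ} (hX : X ⊆ Tr t) :
    setU pr q X t ≤ tu pr q Tr t :=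
  sum_le_sum_of_subset_of_nonneg hX fun i _ _ => itemU_nonneg q hpr i t

variable [DecidableEq ι] (D : Finset τ)

theorem TWU_anti (hpr : ∀ i, 0 ≤ pr i) {X Y : Finset ι} (hXY : X ⊆ Y) :
    TWU pr q Tr D Y ≤ TWU pr q Tr D X := by
  refine sum_le_sum_of_subset_of_nonneg ?_ fun t _ _ => ?_
  · exact monotone_filter_right D fun _ _ hYt => hXY.trans hYt
  · exact sum_nonneg fun i _ => itemU_nonneg q hpr i t

theorem dbU_le_TWU (hpr : ∀ i, 0 ≤ pr i) (X : Finset ι) :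
    dbU pr q Tr D X ≤ TWU pr q Tr D X :=
  sum_le_sum fun _ ht => setU_le_tu q Tr hpr (mem_filter.mp ht).2

end Monotonicity

theorem MIU_eq_of_subset [DecidableEq ι] {mu : ι → ℝ} {X Y : Finset ι} (hX : X.Nonempty)
    (hXY : X ⊆ Y) (hmuY : ∀ j ∈ Y \ X, ∀ i ∈ X, mu i ≤ mu j) :
    MIU mu Y (hX.mono hXY) = MIU mu X hX := by
  refine le_antisymm (inf'_mono mu hXY hX) (le_inf' _ _ fun j hj => ?_)
  by_cases hjX : j ∈ X
  · exact inf'_le mu hjX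
  · obtain ⟨i, hi⟩ := hX
    exact (inf'_le mu hi).trans (hmuY j (mem_sdiff.mpr ⟨hj, hjX⟩) i hi)

theorem EUCP_property_general [DecidableEq ι] (I : Finset ι) (pr mu : ι → ℝ)
    (hpr : ∀ i, 0 ≤ pr i)
    (D : Finset τ) (Tr : τ → Finset ι) (q : ι → τ → ℕ)
    (X : Finset ι) (hX : X.Nonempty)
    (hlow : TWU pr q Tr D X < MIU mu X hX) :
    ∀ (Y : Finset ι) (hXY : X ⊆ Y), Y ⊆ I → 3 ≤ Y.card →
      (∀ j ∈ Y \ X, ∀ i ∈ X, mu j ≥ mu i) →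
      TWU pr q Tr D Y < MIU mu Y (hX.mono hXY) ∧
        dbU pr q Tr D Y < MIU mu Y (hX.mono hXY) := by
  intro Y hXY _ _ hmuY
  have hTWU : TWU pr q Tr D Y < MIU mu Y (hX.mono hXY) :=
    MIU_eq_of_subset hX hXY hmuY ▸ (TWU_anti q Tr D hpr hXY).trans_lt hlow
  exact ⟨hTWU, (dbU_le_TWU q Tr D hpr Y).trans_lt hTWU⟩

/-- EUCP property. If a 2-itemset `X` is not an HTWUI, then every
`k`-itemset (`k ≥ 3`) obtained from `X` by appending items of `mu` value at least those of
all items of `X` is neither an HTWUI nor an HUI. -/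
theorem EUCP_property [DecidableEq ι] (I : Finset ι) (pr mu : ι → ℝ)
    (hpr : ∀ i, 0 ≤ pr i) (hmu : ∀ i, 0 < mu i)
    (D : Finset τ) (Tr : τ → Finset ι) (q : ι → τ → ℕ)
    (hq : ∀ t ∈ D, ∀ i ∈ Tr t, 0 < q i t) (hTr : ∀ t ∈ D, Tr t ⊆ I)
    (X : Finset ι) (hXcard : X.card = 2) (hXI : X ⊆ I)
    (hX : X.Nonempty)
    (hlow : TWU pr q Tr D X < MIU mu X hX) :
    ∀ (Y : Finset ι) (hXY : X ⊆ Y), Y ⊆ I → 3 ≤ Y.card →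
      (∀ j ∈ Y \ X, ∀ i ∈ X, mu j ≥ mu i) →
      TWU pr q Tr D Y < MIU mu Y (hX.mono hXY) ∧
        dbU pr q Tr D Y < MIU mu Y (hX.mono hXY) :=
  EUCP_property_general I pr mu hpr D Tr q X hX hlow
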